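/- arXiv:math/0604013 — 2 statements merged into one kernel-verified Lean document; each statement's English description precedes it below -/
import Mathlib

section
/- Let G ≅ Z_{m_1} × Z_{m_2} × ⋯ × Z_{m_s} be a finite abelian group with m_i dividing m_{i+1} for each i, of order n coprime to the prime power q. Then G has a splitting over Z = {0} given by −q if and only if each cyclic summand Z_{m_i} has a splitting over Z = {0} given by −q. -/
/-!
Since `q` is coprime to every `m i`, multiplication by `-q` is an automorphism of each factor,
so a splitting can equivalently be described by `X₀ = (-q)⁻¹ X₁` and `X₁ = (-q)⁻¹ X₀`.
A splitting of the product restricts along the inclusion of a factor. Conversely, given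
splittings `(X₀ i, X₁ i)` of the factors, put a nonzero `x` into the first or the second part
according to whether its first nonzero coordinate `x i` lies in `X₀ i` or `X₁ i`:
multiplication by `-q` does not move the first nonzero coordinate, and swaps `X₀ i` and `X₁ i`.
-/

/-- An (additive) abelian group `H` has a splitting over `Z = {0}` given by `-q` when `H`
is the union of pairwise disjoint sets `{0}`, `X₀`, `X₁` with `(-q)·X₀ = X₁` and
`(-q)·X₁ = X₀`, the multiplication being `x ↦ (-q) • x`. -/
def HasSplittingByNegQ (H : Type) [AddCommGroup H] (q : ℕ) : Prop :=
  ∃ X₀ X₁ : Set H,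
    ({0} : Set H) ∪ X₀ ∪ X₁ = Set.univ ∧
    (0 : H) ∉ X₀ ∧ (0 : H) ∉ X₁ ∧ Disjoint X₀ X₁ ∧
    (fun x : H => (-(q : ℤ)) • x) '' X₀ = X₁ ∧
    (fun x : H => (-(q : ℤ)) • x) '' X₁ = X₀

open Function Set

theorem zsmul_bijective_of_isUnit {R : Type*} [Ring R] {k : ℤ} (hk : IsUnit (k : R)) :
    Bijective (fun x : R => k • x) := by
  obtain ⟨u, hu⟩ := hk
  simp only [zsmul_eq_mul, ← hu]
  exact u.mulLeft_bijective

section Splitting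

variable {H K : Type} [AddCommGroup H] [AddCommGroup K] {q : ℕ}

theorem hasSplittingByNegQ_iff_preimage (hH : Bijective (fun x : H => (-(q : ℤ)) • x)) :
    HasSplittingByNegQ H q ↔ ∃ X₀ X₁ : Set H,
      ({0} : Set H) ∪ X₀ ∪ X₁ = univ ∧ (0 : H) ∉ X₀ ∧ (0 : H) ∉ X₁ ∧ Disjoint X₀ X₁ ∧
      (fun x : H => (-(q : ℤ)) • x) ⁻¹' X₁ = X₀ ∧ (fun x : H => (-(q : ℤ)) • x) ⁻¹' X₀ = X₁ :=
  exists_congr fun X₀ => exists_congr fun X₁ => by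
    rw [preimage_eq_iff_eq_image hH, preimage_eq_iff_eq_image hH, @eq_comm _ X₁, @eq_comm _ X₀]

theorem HasSplittingByNegQ.of_injective (φ : K →+ H) (hφ : Injective φ)
    (hK : Bijective (fun x : K => (-(q : ℤ)) • x)) (hH : Bijective (fun x : H => (-(q : ℤ)) • x))
    (h : HasSplittingByNegQ H q) : HasSplittingByNegQ K q := by
  rw [hasSplittingByNegQ_iff_preimage hH] at h
  rw [hasSplittingByNegQ_iff_preimage hK]
  obtain ⟨X₀, X₁, hcover, h0₀, h0₁, hdisj, h₀, h₁⟩ := h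
  have hcomm : ∀ X : Set H, (fun x : K => (-(q : ℤ)) • x) ⁻¹' (φ ⁻¹' X) =
      φ ⁻¹' ((fun x : H => (-(q : ℤ)) • x) ⁻¹' X) := fun X => by
    ext x
    simp only [mem_preimage, map_zsmul]
  refine ⟨φ ⁻¹' X₀, φ ⁻¹' X₁, ?_, by simpa using h0₀, by simpa using h0₁, hdisj.preimage φ,
    by rw [hcomm, h₀], by rw [hcomm, h₁]⟩
  refine eq_univ_of_forall fun x => ?_
  have hx : φ x ∈ ({0} : Set H) ∪ X₀ ∪ X₁ := hcover ▸ mem_univ _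
  simpa only [mem_union, mem_singleton_iff, mem_preimage, hφ.eq_iff' (map_zero φ)] using hx

end Splitting

section FirstNonzero

variable {ι : Type} {G : ι → Type}

-- `i` is the first nonzero coordinate of `x` only when `0 ∉ X i`, as it is for splittings.
def firstNonzeroIn [LT ι] [∀ i, Zero (G i)] (X : ∀ i, Set (G i)) : Set (∀ i, G i) :=
  {x | ∃ i, (∀ j < i, x j = 0) ∧ x i ∈ X i}

variable [LinearOrder ι] [∀ i, Zero (G i)]

theorem exists_first_ne_zero [WellFoundedLT ι] {x : ∀ i, G i} (hx : x ≠ 0) :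
    ∃ i, (∀ j < i, x j = 0) ∧ x i ≠ 0 := by
  obtain ⟨i, hi, hmin⟩ := wellFounded_lt.has_min {i | x i ≠ 0} (Function.ne_iff.mp hx)
  exact ⟨i, fun j hj => by_contra fun hxj => hmin j hxj hj, hi⟩

theorem eq_of_first_ne_zero {x : ∀ i, G i} {i i' : ι}
    (hi : ∀ j < i, x j = 0) (hxi : x i ≠ 0) (hi' : ∀ j < i', x j = 0) (hxi' : x i' ≠ 0) :
    i = i' := by
  rcases lt_trichotomy i i' with h | h | h
  · exact absurd (hi' i h) hxi
  · exact h
  · exact absurd (hi i' h) hxi'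

theorem zero_notMem_firstNonzeroIn {X : ∀ i, Set (G i)} (hX : ∀ i, (0 : G i) ∉ X i) :
    (0 : ∀ i, G i) ∉ firstNonzeroIn X :=
  fun ⟨i, _, hi⟩ => hX i hi

theorem preimage_firstNonzeroIn {f : ∀ i, G i → G i} (hf : ∀ i y, f i y = 0 ↔ y = 0)
    (X : ∀ i, Set (G i)) :
    Pi.map f ⁻¹' firstNonzeroIn X = firstNonzeroIn (fun i => f i ⁻¹' X i) := by
  ext x
  simp only [firstNonzeroIn, mem_preimage, mem_ofPred_eq, Pi.map_apply, hf]

end FirstNonzero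

theorem HasSplittingByNegQ.pi {ι : Type} [LinearOrder ι] [WellFoundedLT ι] {G : ι → Type}
    [∀ i, AddCommGroup (G i)] {q : ℕ} (hG : ∀ i, Bijective (fun x : G i => (-(q : ℤ)) • x))
    (h : ∀ i, HasSplittingByNegQ (G i) q) : HasSplittingByNegQ (∀ i, G i) q := by
  simp only [hasSplittingByNegQ_iff_preimage (hG _)] at h
  choose X₀ X₁ hcover h0₀ h0₁ hdisj h₀ h₁ using h
  have hzero : ∀ i (y : G i), (-(q : ℤ)) • y = 0 ↔ y = 0 := fun i y =>
    (hG i).injective.eq_iff' (smul_zero _)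
  rw [hasSplittingByNegQ_iff_preimage (Bijective.piMap hG)]
  refine ⟨firstNonzeroIn X₀, firstNonzeroIn X₁, ?_,
    zero_notMem_firstNonzeroIn h0₀, zero_notMem_firstNonzeroIn h0₁, ?_,
    by rw [← funext h₀]; exact preimage_firstNonzeroIn hzero X₁,
    by rw [← funext h₁]; exact preimage_firstNonzeroIn hzero X₀⟩
  · refine eq_univ_of_forall fun x => ?_
    rcases eq_or_ne x 0 with rfl | hx
    · exact Or.inl (Or.inl rfl)
    obtain ⟨i, hi, hxi⟩ := exists_first_ne_zero hx
    have hcov : x i ∈ ({0} : Set (G i)) ∪ X₀ i ∪ X₁ i := hcover i ▸ mem_univ _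
    rcases hcov with (h0 | h) | h
    · exact absurd h0 hxi
    · exact Or.inl (Or.inr ⟨i, hi, h⟩)
    · exact Or.inr ⟨i, hi, h⟩
  · refine disjoint_left.mpr fun x ⟨i, hi, hx₀⟩ ⟨i', hi', hx₁⟩ => ?_
    obtain rfl := eq_of_first_ne_zero hi (ne_of_mem_of_not_mem hx₀ (h0₀ i)) hi'
      (ne_of_mem_of_not_mem hx₁ (h0₁ i'))
    exact disjoint_left.mp (hdisj i) hx₀ hx₁

theorem stmt8_general
    (s : ℕ) (m : Fin s → ℕ)
    (q : ℕ)
    (hn : Nat.Coprime (∏ i, m i) q) :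
    HasSplittingByNegQ (∀ i, ZMod (m i)) q ↔ ∀ i, HasSplittingByNegQ (ZMod (m i)) q := by
  have hbij : ∀ i, Bijective (fun x : ZMod (m i) => (-(q : ℤ)) • x) := fun i => by
    have hcop : q.Coprime (m i) :=
      (Nat.Coprime.coprime_dvd_left (Finset.dvd_prod_of_mem m (Finset.mem_univ i)) hn).symm
    refine zsmul_bijective_of_isUnit ?_
    push_cast
    exact ((ZMod.isUnit_iff_coprime q (m i)).mpr hcop).neg
  refine ⟨fun h i => ?_, HasSplittingByNegQ.pi hbij⟩
  exact h.of_injective (AddMonoidHom.single (fun i => ZMod (m i)) i)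
    (Pi.single_injective (M := fun i => ZMod (m i)) i) (hbij i) (Bijective.piMap hbij)

/-- Let `G ≅ Z_{m₁} × ⋯ × Z_{m_s}` be a finite abelian group in
invariant-factor form (`m i ∣ m j` for `i ≤ j`), of order `n = ∏ m i` coprime to the prime
power `q`.  Then `G` has a splitting over `Z = {0}` given by `-q` if and only if each
cyclic summand `Z_{m i}` has a splitting over `Z = {0}` given by `-q`. -/
theorem stmt8
    (s : ℕ) (m : Fin s → ℕ) (hm : ∀ i, 0 < m i)
    (hdvd : ∀ i j : Fin s, i ≤ j → m i ∣ m j)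
    (q : ℕ) (hq : IsPrimePow q)
    (hn : Nat.Coprime (∏ i, m i) q) :
    HasSplittingByNegQ (∀ i, ZMod (m i)) q ↔ ∀ i, HasSplittingByNegQ (ZMod (m i)) q :=
  stmt8_general s m q hn
end

section
/- Let l be a positive odd integer relatively prime to the prime power q. Then l is split by −q over F_{q²} — i.e., the nonzero residues modulo l admit a partition X_0 ∪ X_1 with (−q)·X_0 = X_1 and (−q)·X_1 = X_0 (multiplication modulo l) — if and only if ord_r(q) ≢ 2 (mod 4) for every prime r dividing l. -/
open Function

private theorem per_of_bij {α : Type*} [Finite α] (f : α → α) (hf : f.Bijective) (x : α) :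
    x ∈ periodicPts f := by
  let e : Equiv.Perm α := Equiv.ofBijective f hf
  have hcoe : ∀ n : ℕ, f^[n] = ⇑(e ^ n) := by
    intro n
    rw [← Equiv.Perm.iterate_eq_pow]
    rfl
  have hpos : 0 < orderOf e := orderOf_pos e
  refine mem_periodicPts.mpr ⟨orderOf e, hpos, ?_⟩
  show f^[orderOf e] x = x
  rw [hcoe, pow_orderOf_eq_one e]
  rfl

private theorem combo {α : Type*} [Finite α] (f : α → α) (hf : f.Bijective) :
    (∃ g : α → Bool, ∀ x, g (f x) = !g x) ↔ ∀ x, Even (Function.minimalPeriod f x) := by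
  classical
  have hper : ∀ x : α, x ∈ periodicPts f := per_of_bij f hf
  constructor
  · rintro ⟨g, hg⟩ x
    have key : ∀ k, g (f^[k] x) = if k % 2 = 0 then g x else !g x := by
      intro k
      induction k with
      | zero => simp
      | succ k ih =>
        rw [iterate_succ_apply', hg, ih]
        rcases Nat.even_or_odd k with h | h
        · have h0 : k % 2 = 0 := Nat.even_iff.mp h
          have h1 : (k+1) % 2 = 1 := by omega
          simp [h0, h1]
        · have h0 : k % 2 = 1 := Nat.odd_iff.mp h
          have h1 : (k+1) % 2 = 0 := by omega
          simp [h0, h1]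
    have hmp := key (minimalPeriod f x)
    rw [iterate_minimalPeriod] at hmp
    by_contra hodd
    have h1 : minimalPeriod f x % 2 = 1 := by
      rcases Nat.even_or_odd (minimalPeriod f x) with h | h
      · exact absurd h hodd
      · exact Nat.odd_iff.mp h
    rw [h1] at hmp
    simp at hmp
  · intro hev
    have hsymm : ∀ x y : α, (∃ k, f^[k] x = y) → ∃ k, f^[k] y = x := by
      rintro x y ⟨k, rfl⟩
      obtain ⟨n, hn, hxn⟩ := mem_periodicPts.mp (hper x)
      refine ⟨n * (k + 1) - k, ?_⟩
      have hk : k ≤ n * (k + 1) := by nlinarith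
      have : (n * (k + 1) - k) + k = n * (k + 1) := by omega
      rw [← Function.iterate_add_apply, this]
      exact hxn.mul_const (k + 1)
    let s : Setoid α := ⟨fun x y => ∃ k, f^[k] x = y,
      ⟨fun x => ⟨0, rfl⟩, fun h => hsymm _ _ h,
        fun {x y z} ⟨k, hk⟩ ⟨m, hm⟩ => ⟨m + k, by rw [Function.iterate_add_apply, hk, hm]⟩⟩⟩
    have hrep : ∀ x : α, ∃ k, f^[k] ((Quotient.mk s x).out) = x := by
      intro x
      exact Quotient.exact ((Quotient.mk s x).out_eq)
    have hrepf : ∀ x : α, (Quotient.mk s (f x)).out = (Quotient.mk s x).out := by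
      intro x
      have : Quotient.mk s (f x) = Quotient.mk s x :=
        (Quotient.sound (⟨1, rfl⟩ : ∃ k, f^[k] x = f x)).symm
      rw [this]
    refine ⟨fun x => decide (Nat.find (hrep x) % 2 = 1), fun x => ?_⟩
    set z : α := (Quotient.mk s x).out with hz
    set m : ℕ := minimalPeriod f z with hmz
    have hmpos : 0 < m := minimalPeriod_pos_of_mem_periodicPts (hper z)
    have hm2 : 2 ∣ m := (hev z).two_dvd
    have ha0 := Nat.find_spec (hrep x)
    have hb0 := Nat.find_spec (hrep (f x))
    set a : ℕ := Nat.find (hrep x) with hadef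
    set b : ℕ := Nat.find (hrep (f x)) with hbdef
    have ha : f^[a] z = x := ha0
    have hb : f^[b] z = f x := by rwa [hrepf x] at hb0
    have ha1 : f^[a + 1] z = f x := by
      rw [iterate_succ_apply', ha]
    have hmod : b % m = (a + 1) % m := by
      apply iterate_injOn_Iio_minimalPeriod (x := z) (Set.mem_Iio.mpr (Nat.mod_lt _ hmpos))
        (Set.mem_Iio.mpr (Nat.mod_lt _ hmpos))
      show f^[b % m] z = f^[(a+1) % m] z
      rw [iterate_mod_minimalPeriod_eq, iterate_mod_minimalPeriod_eq, hb, ha1]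
    have hab : b % 2 = (a + 1) % 2 := by
      have h1 : b % m % 2 = b % 2 := Nat.mod_mod_of_dvd b hm2
      have h2 : (a+1) % m % 2 = (a+1) % 2 := Nat.mod_mod_of_dvd (a+1) hm2
      rw [← h1, ← h2, hmod]
    show decide (b % 2 = 1) = !decide (a % 2 = 1)
    rcases Nat.even_or_odd a with h | h
    · have h1 : a % 2 = 0 := Nat.even_iff.mp h
      have h2 : b % 2 = 1 := by omega
      simp [h1, h2]
    · have h1 : a % 2 = 1 := Nat.odd_iff.mp h
      have h2 : b % 2 = 0 := by omega
      simp [h1, h2]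

private theorem minPeriod_subtype {α : Type*} {p : α → Prop} (f : α → α)
    (f' : {a // p a} → {a // p a}) (hcomm : ∀ y, (f' y : α) = f y.1)
    (y : {a // p a}) (hper : (y : α) ∈ periodicPts f) :
    Function.minimalPeriod f' y = Function.minimalPeriod f y.1 := by
  have hit : ∀ (k : ℕ) (z : {a // p a}), ((f'^[k] z : {a // p a}) : α) = f^[k] z.1 := by
    intro k
    induction k with
    | zero => intro z; simp
    | succ k ih =>
      intro z
      rw [iterate_succ_apply', iterate_succ_apply', hcomm, ih]
  have hiff : ∀ (k : ℕ) (z : {a // p a}), IsPeriodicPt f' k z ↔ IsPeriodicPt f k z.1 := by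
    intro k z
    constructor
    · intro h
      have := congrArg Subtype.val (h : f'^[k] z = z)
      rwa [hit] at this
    · intro h
      exact Subtype.ext (by rw [hit]; exact h)
  apply Nat.dvd_antisymm
  · exact Function.IsPeriodicPt.minimalPeriod_dvd
      ((hiff _ y).mpr (isPeriodicPt_minimalPeriod f y.1))
  · exact Function.IsPeriodicPt.minimalPeriod_dvd
      ((hiff _ y).mp (isPeriodicPt_minimalPeriod f' y))

private theorem parity_lemma (r q : ℕ) (hr : r.Prime) (hrodd : r ≠ 2) (hq : ¬ r ∣ q) :
    Even (orderOf (-(q : ZMod r))) ↔ orderOf (q : ZMod r) % 4 ≠ 2 := by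
  haveI : Fact r.Prime := ⟨hr⟩
  have hr2 : 2 < r := lt_of_le_of_ne hr.two_le (Ne.symm hrodd)
  haveI : Fact (2 < r) := ⟨hr2⟩
  have hne : (-1 : ZMod r) ≠ 1 := ZMod.neg_one_ne_one
  set a : ZMod r := (q : ZMod r) with hadef
  have ha : a ≠ 0 := by
    rw [hadef, Ne, ZMod.natCast_eq_zero_iff]
    exact hq
  set b : ZMod r := -a with hbdef
  have hb : b ≠ 0 := neg_ne_zero.mpr ha
  have horder : ∀ c : ZMod r, c ≠ 0 → 0 < orderOf c := by
    intro c hc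
    rw [orderOf_pos_iff, isOfFinOrder_iff_pow_eq_one]
    exact ⟨r - 1, by omega, ZMod.pow_card_sub_one_eq_one hc⟩
  set n : ℕ := orderOf a with hndef
  set m : ℕ := orderOf b with hmdef
  have hnpos : 0 < n := horder a ha
  have hmpos : 0 < m := horder b hb
  have han : a ^ n = 1 := pow_orderOf_eq_one a
  have hab : a = -b := by rw [hbdef, neg_neg]
  -- If m is odd then a ^ m = -1
  have hodd_m : ¬ Even m → a ^ m = -1 := by
    intro hm
    have hmo : Odd m := Nat.not_even_iff_odd.mp hm
    rw [hab, hmo.neg_pow, pow_orderOf_eq_one]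
  have hcase_0 : n % 4 = 0 → Even m := by
    intro h0
    by_contra hm
    have ham : a ^ m = -1 := hodd_m hm
    have h2m : a ^ (m * 2) = 1 := by rw [pow_mul, ham, neg_one_sq]
    have hn2m : n ∣ m * 2 := orderOf_dvd_iff_pow_eq_one.mpr h2m
    have h4 : 4 ∣ m * 2 := dvd_trans (Nat.dvd_of_mod_eq_zero h0) hn2m
    obtain ⟨t, ht⟩ := h4
    have hm1 : m % 2 = 1 := Nat.odd_iff.mp (Nat.not_even_iff_odd.mp hm)
    omega
  have hcase_odd : n % 2 = 1 → Even m := by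
    intro h1
    by_contra hm
    have ham : a ^ m = -1 := hodd_m hm
    have h2m : a ^ (m * 2) = 1 := by rw [pow_mul, ham, neg_one_sq]
    have hn2m : n ∣ m * 2 := orderOf_dvd_iff_pow_eq_one.mpr h2m
    have hcop2 : Nat.Coprime n 2 := by
      exact Nat.coprime_two_right.mpr (Nat.odd_iff.mpr h1)
    have hnm : n ∣ m := hcop2.dvd_of_dvd_mul_right hn2m
    have : a ^ m = 1 := orderOf_dvd_iff_pow_eq_one.mp hnm
    rw [ham] at this
    exact hne this
  have hcase_2 : n % 4 = 2 → ¬ Even m := by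
    intro h2
    set u : ℕ := n / 2 with hudef
    have hu : n = 2 * u := by omega
    have huo : u % 2 = 1 := by omega
    have hupos : 0 < u := by omega
    have hx2 : a ^ u * a ^ u = 1 := by
      rw [← pow_add]
      have : u + u = n := by omega
      rw [this, han]
    have hx1 : a ^ u ≠ 1 := by
      intro h
      have : n ∣ u := orderOf_dvd_iff_pow_eq_one.mpr h
      have := Nat.le_of_dvd hupos this
      omega
    have hxneg : a ^ u = -1 := (mul_self_eq_one_iff.mp hx2).resolve_left hx1
    have hbu : b ^ u = 1 := by
      rw [hbdef, (Nat.odd_iff.mpr huo).neg_pow, hxneg, neg_neg]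
    have hmu : m ∣ u := orderOf_dvd_iff_pow_eq_one.mpr hbu
    intro hEm
    have h2u : 2 ∣ u := dvd_trans hEm.two_dvd hmu
    omega
  have htri : n % 4 = 0 ∨ n % 4 = 2 ∨ n % 2 = 1 := by omega
  rcases htri with h | h | h
  · exact iff_of_true (hcase_0 h) (by omega)
  · exact iff_of_false (hcase_2 h) (fun hne' => hne' h)
  · exact iff_of_true (hcase_odd h) (by omega)

private theorem bridge (l q : ℕ) (hl : 0 < l) (x : ZMod l) (k : ℕ) :
    (fun y : ZMod l => -(q : ZMod l) * y)^[k] x = x ↔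
      ((l / Nat.gcd (ZMod.val x) l : ℕ) : ℤ) ∣ (-(q : ℤ)) ^ k - 1 := by
  haveI : NeZero l := ⟨hl.ne'⟩
  set c : ZMod l := -(q : ZMod l) with hc
  have hit : (fun y : ZMod l => c * y)^[k] x = c ^ k * x := by
    induction k with
    | zero => simp
    | succ k ih => rw [iterate_succ_apply', ih, pow_succ]; ring
  have h1 : (c ^ k * x = x) ↔ ((c ^ k - 1) * x = 0) := by
    rw [sub_mul, one_mul, sub_eq_zero]
  have hcast3 : (((((-(q:ℤ))^k - 1) * (ZMod.val x : ℤ)) : ℤ) : ZMod l) = (c ^ k - 1) * x := by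
    push_cast
    rw [ZMod.natCast_zmod_val, hc]
  have h2 : ((c ^ k - 1) * x = 0) ↔ (l:ℤ) ∣ ((-(q:ℤ))^k - 1) * (ZMod.val x : ℤ) := by
    rw [← hcast3, ZMod.intCast_zmod_eq_zero_iff_dvd]
  set g := Nat.gcd (ZMod.val x) l with hgdef
  set d := l / g with hddef
  have hg0 : 0 < g := Nat.gcd_pos_of_pos_right _ hl
  have hgl : g ∣ l := Nat.gcd_dvd_right _ _
  have hgx : g ∣ ZMod.val x := Nat.gcd_dvd_left _ _
  set v := ZMod.val x / g with hvdef
  have hco : Nat.Coprime v d := Nat.coprime_div_gcd_div_gcd hg0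
  have hl' : l = g * d := (Nat.mul_div_cancel' hgl).symm
  have hx' : ZMod.val x = g * v := (Nat.mul_div_cancel' hgx).symm
  have h3 : (l:ℤ) ∣ ((-(q:ℤ))^k - 1) * (ZMod.val x : ℤ) ↔ (d:ℤ) ∣ ((-(q:ℤ))^k - 1) := by
    have hlz : (l:ℤ) = (g:ℤ) * (d:ℤ) := by exact_mod_cast congrArg (Nat.cast (R := ℤ)) hl'
    have hxz : (ZMod.val x : ℤ) = (g:ℤ) * (v:ℤ) := by
      exact_mod_cast congrArg (Nat.cast (R := ℤ)) hx'
    rw [hlz, hxz]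
    constructor
    · intro hdvd
      have hre : ((-(q:ℤ))^k - 1) * ((g:ℤ) * (v:ℤ)) =
          (g:ℤ) * ((v:ℤ) * ((-(q:ℤ))^k - 1)) := by ring
      rw [hre] at hdvd
      have hgz : (g:ℤ) ≠ 0 := by exact_mod_cast hg0.ne'
      have hdv : (d:ℤ) ∣ (v:ℤ) * ((-(q:ℤ))^k - 1) :=
        (mul_dvd_mul_iff_left hgz).mp hdvd
      exact (Nat.isCoprime_iff_coprime.mpr hco.symm).dvd_of_dvd_mul_left hdv
    · intro hdvd
      obtain ⟨s, hs⟩ := hdvd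
      exact ⟨s * v, by rw [hs]; ring⟩
  rw [hit]
  exact h1.trans (h2.trans h3)



/-- Let `l` be a positive odd integer relatively prime to the prime
power `q`.  Then `l` is split by `-q` over `F_{q²}` — i.e. the nonzero residues modulo `l`
admit a partition `X₀ ∪ X₁` with `(-q)·X₀ = X₁` and `(-q)·X₁ = X₀` (multiplication
modulo `l`) — if and only if `ord_r(q) ≢ 2 (mod 4)` for every prime `r` dividing `l`. -/
theorem stmt10
    (l q : ℕ) (hl : 0 < l) (hlodd : Odd l) (hq : IsPrimePow q)
    (hcop : Nat.Coprime l q) :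
    (∃ X₀ X₁ : Set (ZMod l),
        X₀ ∪ X₁ = {x : ZMod l | x ≠ 0} ∧ Disjoint X₀ X₁ ∧
        (fun x : ZMod l => -(q : ZMod l) * x) '' X₀ = X₁ ∧
        (fun x : ZMod l => -(q : ZMod l) * x) '' X₁ = X₀) ↔
      ∀ r : ℕ, r.Prime → r ∣ l → orderOf (q : ZMod r) % 4 ≠ 2 := by
  classical
  haveI : NeZero l := ⟨hl.ne'⟩
  set c : ZMod l := -(q : ZMod l) with hc
  set f : ZMod l → ZMod l := fun x => c * x with hfdef
  have hu : IsUnit c := ((ZMod.isUnit_iff_coprime q l).mpr hcop.symm).neg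
  obtain ⟨ci, hci⟩ : ∃ ci : ZMod l, ci * c = 1 := by
    obtain ⟨u, hu'⟩ := hu
    exact ⟨↑u⁻¹, by rw [← hu']; exact u.inv_mul⟩
  have hinj : Function.Injective f := by
    intro x y h
    have h2 : ci * (c * x) = ci * (c * y) := congrArg (ci * ·) h
    rwa [← mul_assoc, ← mul_assoc, hci, one_mul, one_mul] at h2
  have hsurj : Function.Surjective f := by
    intro y
    refine ⟨ci * y, ?_⟩
    show c * (ci * y) = y
    rw [← mul_assoc, mul_comm c ci, hci, one_mul]
  have hfbij : Function.Bijective f := ⟨hinj, hsurj⟩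
  have hf0 : f 0 = 0 := mul_zero c
  have hzero : ∀ x : ZMod l, f x = 0 ↔ x = 0 :=
    fun x => ⟨fun h => hinj (h.trans hf0.symm), fun h => by rw [h]; exact hf0⟩
  set S := {a : ZMod l // a ≠ 0} with hSdef
  set f' : S → S := fun y => ⟨f y.1, fun h => y.2 ((hzero y.1).mp h)⟩ with hf'def
  have hcomm : ∀ y : S, (f' y : ZMod l) = f y.1 := fun y => rfl
  have hf'bij : Function.Bijective f' := by
    constructor
    · intro y z h
      exact Subtype.ext (hinj (congrArg Subtype.val h))
    · intro z
      obtain ⟨w, hw⟩ := hsurj z.1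
      have hwne : w ≠ 0 := fun h0 => z.2 (by rw [← hw, h0]; exact hf0)
      exact ⟨⟨w, hwne⟩, Subtype.ext hw⟩
  have hper : ∀ x : ZMod l, x ∈ periodicPts f := per_of_bij f hfbij
  have stepA : (∃ X₀ X₁ : Set (ZMod l),
        X₀ ∪ X₁ = {x : ZMod l | x ≠ 0} ∧ Disjoint X₀ X₁ ∧
        f '' X₀ = X₁ ∧ f '' X₁ = X₀) ↔
      (∃ g : S → Bool, ∀ y, g (f' y) = !g y) := by
    constructor
    · rintro ⟨X₀, X₁, hun, hdis, h01, h10⟩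
      refine ⟨fun y => decide (y.1 ∈ X₁), fun y => ?_⟩
      have hy : y.1 ∈ X₀ ∪ X₁ := by rw [hun]; exact y.2
      rcases hy with hy0 | hy1
      · have hfy1 : f y.1 ∈ X₁ := by rw [← h01]; exact ⟨y.1, hy0, rfl⟩
        have hyn1 : y.1 ∉ X₁ := Set.disjoint_left.mp hdis hy0
        simp [hcomm, hfy1, hyn1]
      · have hfy0 : f y.1 ∈ X₀ := by rw [← h10]; exact ⟨y.1, hy1, rfl⟩
        have hfyn1 : f y.1 ∉ X₁ := Set.disjoint_left.mp hdis hfy0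
        simp [hcomm, hy1, hfyn1]
    · rintro ⟨g, hg⟩
      refine ⟨{x | ∃ h : x ≠ 0, g ⟨x, h⟩ = false}, {x | ∃ h : x ≠ 0, g ⟨x, h⟩ = true},
        ?_, ?_, ?_, ?_⟩
      · ext x
        simp only [Set.mem_union, Set.mem_setOf_eq]
        constructor
        · rintro (⟨h, _⟩ | ⟨h, _⟩) <;> exact h
        · intro h
          cases hgx : g ⟨x, h⟩
          · exact Or.inl ⟨h, hgx⟩
          · exact Or.inr ⟨h, hgx⟩
      · rw [Set.disjoint_left]
        rintro x ⟨h1, hf⟩ ⟨h2, ht⟩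
        exact Bool.false_ne_true (hf.symm.trans ht)
      · ext zz
        simp only [Set.mem_image, Set.mem_setOf_eq]
        constructor
        · rintro ⟨x, ⟨hx, hgx⟩, rfl⟩
          have hfx : f x ≠ 0 := fun h0 => hx ((hzero x).mp h0)
          refine ⟨hfx, ?_⟩
          have hh := hg ⟨x, hx⟩
          rw [hgx] at hh
          exact hh
        · rintro ⟨hz, hgz⟩
          obtain ⟨w, hw⟩ := hsurj zz
          have hwne : w ≠ 0 := fun h0 => hz (by rw [← hw, h0]; exact hf0)
          refine ⟨w, ⟨hwne, ?_⟩, hw⟩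
          have hh := hg ⟨w, hwne⟩
          have he : f' ⟨w, hwne⟩ = ⟨zz, hz⟩ := Subtype.ext hw
          rw [he, hgz] at hh
          cases hgw : g ⟨w, hwne⟩
          · rfl
          · rw [hgw] at hh; simp at hh
      · ext zz
        simp only [Set.mem_image, Set.mem_setOf_eq]
        constructor
        · rintro ⟨x, ⟨hx, hgx⟩, rfl⟩
          have hfx : f x ≠ 0 := fun h0 => hx ((hzero x).mp h0)
          refine ⟨hfx, ?_⟩
          have hh := hg ⟨x, hx⟩
          rw [hgx] at hh
          exact hh
        · rintro ⟨hz, hgz⟩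
          obtain ⟨w, hw⟩ := hsurj zz
          have hwne : w ≠ 0 := fun h0 => hz (by rw [← hw, h0]; exact hf0)
          refine ⟨w, ⟨hwne, ?_⟩, hw⟩
          have hh := hg ⟨w, hwne⟩
          have he : f' ⟨w, hwne⟩ = ⟨zz, hz⟩ := Subtype.ext hw
          rw [he, hgz] at hh
          cases hgw : g ⟨w, hwne⟩
          · rw [hgw] at hh; simp at hh
          · rfl
  have stepC : (∀ y : S, Even (minimalPeriod f' y)) ↔
      (∀ x : ZMod l, x ≠ 0 → Even (minimalPeriod f x)) := by
    constructor
    · intro h x hx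
      have := h ⟨x, hx⟩
      rwa [minPeriod_subtype f f' hcomm ⟨x, hx⟩ (hper x)] at this
    · intro h y
      rw [minPeriod_subtype f f' hcomm y (hper y.1)]
      exact h y.1 y.2
  have stepD : (∀ x : ZMod l, x ≠ 0 → Even (minimalPeriod f x)) ↔
      (∀ r : ℕ, r.Prime → r ∣ l → orderOf (q : ZMod r) % 4 ≠ 2) := by
    constructor
    · intro h r hr hrl
      have hr2 : r ≠ 2 := by
        intro h2
        rw [h2] at hrl
        rw [Nat.odd_iff] at hlodd
        omega
      have hrq : ¬ r ∣ q :=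
        (Nat.Prime.coprime_iff_not_dvd hr).mp (Nat.Coprime.coprime_dvd_left hrl hcop)
      haveI : Fact r.Prime := ⟨hr⟩
      have hlr_lt : l / r < l := Nat.div_lt_self hl hr.one_lt
      have hlr_pos : 0 < l / r := Nat.div_pos (Nat.le_of_dvd hl hrl) hr.pos
      set x : ZMod l := ((l / r : ℕ) : ZMod l) with hxdef
      have hxne : x ≠ 0 := by
        rw [hxdef, Ne, ZMod.natCast_eq_zero_iff]
        intro hdvd
        exact absurd (Nat.le_of_dvd hlr_pos hdvd) (by omega)
      have hval : ZMod.val x = l / r := by rw [hxdef]; exact ZMod.val_cast_of_lt hlr_lt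
      have hd : l / Nat.gcd (ZMod.val x) l = r := by
        rw [hval, Nat.gcd_eq_left (Nat.div_dvd_of_dvd hrl)]
        exact Nat.div_div_self hrl hl.ne'
      have hbr : ∀ k, f^[k] x = x ↔ (r : ℤ) ∣ (-(q : ℤ)) ^ k - 1 := by
        intro k
        have hb := bridge l q hl x k
        rwa [hd] at hb
      have hiffr : ∀ k, ((r : ℤ) ∣ (-(q : ℤ)) ^ k - 1) ↔ (-(q : ZMod r)) ^ k = 1 := by
        intro k
        have hc2 : ((((-(q:ℤ)) ^ k - 1 : ℤ)) : ZMod r) = (-(q : ZMod r)) ^ k - 1 := by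
          push_cast; ring
        rw [← ZMod.intCast_zmod_eq_zero_iff_dvd, hc2, sub_eq_zero]
      have hbne : (-(q : ZMod r)) ≠ 0 := by
        rw [neg_ne_zero, Ne, ZMod.natCast_eq_zero_iff]
        exact hrq
      have hopos : 0 < orderOf (-(q : ZMod r)) := by
        rw [orderOf_pos_iff, isOfFinOrder_iff_pow_eq_one]
        exact ⟨r - 1, by have := hr.two_le; omega, ZMod.pow_card_sub_one_eq_one hbne⟩
      have hper_o : IsPeriodicPt f (orderOf (-(q : ZMod r))) x :=
        (hbr _).mpr ((hiffr _).mpr (pow_orderOf_eq_one _))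
      have hmo : minimalPeriod f x ∣ orderOf (-(q : ZMod r)) := hper_o.minimalPeriod_dvd
      have hom : orderOf (-(q : ZMod r)) ∣ minimalPeriod f x :=
        orderOf_dvd_iff_pow_eq_one.mpr ((hiffr _).mp ((hbr _).mp iterate_minimalPeriod))
      have heq : minimalPeriod f x = orderOf (-(q : ZMod r)) := Nat.dvd_antisymm hmo hom
      have hEo : Even (orderOf (-(q : ZMod r))) := heq ▸ h x hxne
      exact (parity_lemma r q hr hr2 hrq).mp hEo
    · intro h x hx
      set m := minimalPeriod f x with hmdef
      have hmx : f^[m] x = x := iterate_minimalPeriod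
      have hdd := (bridge l q hl x m).mp hmx
      have hgl : Nat.gcd (ZMod.val x) l ∣ l := Nat.gcd_dvd_right _ _
      have hddl : l / Nat.gcd (ZMod.val x) l ∣ l := Nat.div_dvd_of_dvd hgl
      have hdd1 : l / Nat.gcd (ZMod.val x) l ≠ 1 := by
        intro h1
        have hmul : Nat.gcd (ZMod.val x) l * (l / Nat.gcd (ZMod.val x) l) = l :=
          Nat.mul_div_cancel' hgl
        rw [h1, mul_one] at hmul
        have hlx : l ∣ ZMod.val x := by
          have h' := Nat.gcd_dvd_left (ZMod.val x) l
          rwa [hmul] at h'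
        have hvlt : ZMod.val x < l := ZMod.val_lt x
        have hv0 : ZMod.val x = 0 := by
          rcases Nat.eq_zero_or_pos (ZMod.val x) with h0 | h0
          · exact h0
          · exact absurd (Nat.le_of_dvd h0 hlx) (by omega)
        exact hx ((ZMod.val_eq_zero x).mp hv0)
      set r := (l / Nat.gcd (ZMod.val x) l).minFac with hrdef
      have hrprime : r.Prime := Nat.minFac_prime hdd1
      have hrdd : r ∣ l / Nat.gcd (ZMod.val x) l := Nat.minFac_dvd _
      have hrl : r ∣ l := hrdd.trans hddl
      have hr2 : r ≠ 2 := by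
        intro h2
        rw [h2] at hrl
        rw [Nat.odd_iff] at hlodd
        omega
      have hrq : ¬ r ∣ q :=
        (Nat.Prime.coprime_iff_not_dvd hrprime).mp (Nat.Coprime.coprime_dvd_left hrl hcop)
      haveI : Fact r.Prime := ⟨hrprime⟩
      have hrz : (r : ℤ) ∣ (-(q : ℤ)) ^ m - 1 :=
        dvd_trans (Int.natCast_dvd_natCast.mpr hrdd) hdd
      have hc2 : ((((-(q:ℤ)) ^ m - 1 : ℤ)) : ZMod r) = (-(q : ZMod r)) ^ m - 1 := by
        push_cast; ring
      have hpow : (-(q : ZMod r)) ^ m = 1 := by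
        have h0 := (ZMod.intCast_zmod_eq_zero_iff_dvd _ r).mpr hrz
        rwa [hc2, sub_eq_zero] at h0
      have hordm : orderOf (-(q : ZMod r)) ∣ m := orderOf_dvd_iff_pow_eq_one.mpr hpow
      have hEord : Even (orderOf (-(q : ZMod r))) :=
        (parity_lemma r q hrprime hr2 hrq).mpr (h r hrprime hrl)
      obtain ⟨t, ht⟩ := dvd_trans hEord.two_dvd hordm
      exact ⟨t, by omega⟩
  exact stepA.trans ((combo f' hf'bij).trans (stepC.trans stepD))
end
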